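/- arXiv:math-ph/0110036 — 2 statements merged into one kernel-verified Lean document; each statement's English description precedes it below -/
import Mathlib

section
/- If f : ℝ⁶ × ℝ → ℝ solves the Vlasov (Liouville) equation ∂f/∂t + {f, H} = 0 with canonical Poisson bracket and f is parameterized as f(·,t) = f⁰(·,t) ∘ ψ(t)⁻¹ by a family of symplectomorphisms ψ(t) with Hamiltonian generator ψ_t (i.e. (∂ψ/∂t)∘ψ⁻¹ = X_{ψ_t}) where ∂f⁰/∂t + {f⁰, H₀} = 0, then the generator satisfies {ψ_t + (ψ⁻¹)*H₀ − H, f} = 0; in particular it suffices that H = ψ_t + (ψ⁻¹)* H₀. -/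
open scoped BigOperators
noncomputable section

abbrev E3 := EuclideanSpace ℝ (Fin 3)
abbrev Ph := E3 × E3

/-- Canonical Poisson bracket `{f,g} = ∇ₓf·∇ₚg − ∇ₚf·∇ₓg` on `ℝ⁶`. -/
def pb (f g : Ph → ℝ) (z : Ph) : ℝ :=
  ∑ i,
    (fderiv ℝ f z (EuclideanSpace.single i 1, 0) * fderiv ℝ g z (0, EuclideanSpace.single i 1)
      - fderiv ℝ f z (0, EuclideanSpace.single i 1) * fderiv ℝ g z (EuclideanSpace.single i 1, 0))

/-- Hamiltonian vector field of `h`: `X_h = (∇ₚh, −∇ₓh)`. -/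
def Xham (h : Ph → ℝ) (z : Ph) : Ph :=
  (∑ i, fderiv ℝ h z (0, EuclideanSpace.single i 1) • EuclideanSpace.single i 1,
   ∑ i, (-(fderiv ℝ h z (EuclideanSpace.single i 1, 0))) • EuclideanSpace.single i 1)

/-- Antisymmetry of the Poisson bracket. -/
lemma pb_skew (f g : Ph → ℝ) (z : Ph) : pb f g z = - pb g f z := by
  unfold pb
  rw [← Finset.sum_neg_distrib]
  exact Finset.sum_congr rfl fun i _ => by ring

/-- Additivity of the bracket in its second argument. -/
lemma pb_add₂ (f g h : Ph → ℝ) (z : Ph) (hg : DifferentiableAt ℝ g z)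
    (hh : DifferentiableAt ℝ h z) :
    pb f (fun x => g x + h x) z = pb f g z + pb f h z := by
  unfold pb
  rw [fderiv_fun_add hg hh, ← Finset.sum_add_distrib]
  exact Finset.sum_congr rfl fun i _ => by
    simp [ContinuousLinearMap.add_apply]; ring

/-- Subtractivity of the bracket in its second argument. -/
lemma pb_sub₂ (f g h : Ph → ℝ) (z : Ph) (hg : DifferentiableAt ℝ g z)
    (hh : DifferentiableAt ℝ h z) :
    pb f (fun x => g x - h x) z = pb f g z - pb f h z := by
  unfold pb
  rw [fderiv_fun_sub hg hh, ← Finset.sum_sub_distrib]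
  exact Finset.sum_congr rfl fun i _ => by
    simp [ContinuousLinearMap.sub_apply]; ring

/-- The Poisson bracket is the pairing of `df` with the Hamiltonian vector field. -/
lemma pb_eq_fderiv_Xham (f h : Ph → ℝ) (z : Ph) :
    pb f h z = fderiv ℝ f z (Xham h z) := by
  have hx : Xham h z
      = (∑ i, fderiv ℝ h z (0, EuclideanSpace.single i 1) •
            ((EuclideanSpace.single i 1 : E3), (0 : E3)))
        + ∑ i, (-(fderiv ℝ h z (EuclideanSpace.single i 1, 0))) •
            ((0 : E3), (EuclideanSpace.single i 1 : E3)) := by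
    simp [Xham, Prod.ext_iff, Prod.fst_sum, Prod.snd_sum, Prod.smul_mk,
      Finset.sum_add_distrib]
  rw [hx, map_add, map_sum, map_sum]
  simp only [map_smul, smul_eq_mul]
  unfold pb
  rw [← Finset.sum_add_distrib]
  exact Finset.sum_congr rfl fun i _ => by ring

/-- Chain rule for a time-dependent function along a curve. -/
lemma chain_time (f : ℝ → Ph → ℝ) (hf : ContDiff ℝ (⊤ : ℕ∞) fun q : ℝ × Ph => f q.1 q.2)
    (γ : ℝ → Ph) (t : ℝ) (hγ : DifferentiableAt ℝ γ t) :
    deriv (fun s => f s (γ s)) t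
      = deriv (fun s => f s (γ t)) t + fderiv ℝ (f t) (γ t) (deriv γ t) := by
  have hFd : DifferentiableAt ℝ (fun q : ℝ × Ph => f q.1 q.2) (t, γ t) :=
    hf.differentiable (by simp) (t, γ t)
  set L := fderiv ℝ (fun q : ℝ × Ph => f q.1 q.2) (t, γ t) with hL
  have hF : HasFDerivAt (fun q : ℝ × Ph => f q.1 q.2) L (t, γ t) := hFd.hasFDerivAt
  have hcurve : HasDerivAt (fun s => (s, γ s)) ((1:ℝ), deriv γ t) t :=
    (hasDerivAt_id t).prodMk hγ.hasDerivAt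
  have h1 : HasDerivAt (fun s => f s (γ s)) (L (1, deriv γ t)) t :=
    by have := hF.comp_hasDerivAt t hcurve; exact this
  have h2 : HasDerivAt (fun s => f s (γ t)) (L (1, (0:Ph))) t := by
    have : HasDerivAt (fun s : ℝ => (s, γ t)) ((1:ℝ), (0:Ph)) t :=
      (hasDerivAt_id t).prodMk (hasDerivAt_const t (γ t))
    exact hF.comp_hasDerivAt t this
  have h3 : HasFDerivAt (f t) (L.comp (ContinuousLinearMap.inr ℝ ℝ Ph)) (γ t) := by
    have hmk : HasFDerivAt (fun x : Ph => ((t : ℝ), x))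
        (ContinuousLinearMap.inr ℝ ℝ Ph) (γ t) := hasFDerivAt_prodMk_right t (γ t)
    exact hF.comp (γ t) hmk
  have e3 : fderiv ℝ (f t) (γ t) (deriv γ t) = L (0, deriv γ t) := by
    rw [h3.fderiv]; simp
  rw [h1.deriv, h2.deriv, e3]
  have : ((1:ℝ), deriv γ t) = ((1:ℝ), (0:Ph)) + ((0:ℝ), deriv γ t) := by
    simp [Prod.ext_iff]
  rw [this, map_add]

/-- Smoothness of a time-slice of a jointly smooth family. -/
lemma slice_contDiff {F : Type*} [NormedAddCommGroup F] [NormedSpace ℝ F]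
    (f : ℝ → Ph → F) (hf : ContDiff ℝ (⊤ : ℕ∞) fun q : ℝ × Ph => f q.1 q.2) (t : ℝ) :
    ContDiff ℝ (⊤ : ℕ∞) (f t) :=
  hf.comp (contDiff_const.prodMk contDiff_id)

/-- if `f` solves the Vlasov equation `∂f/∂t + {f,H} = 0` and is
parameterized as `f(·,t) = f⁰(·,t) ∘ ψ(t)⁻¹` by symplectomorphisms `ψ(t)` with Hamiltonian
generator `ψₜ`, where `f⁰` solves the Vlasov equation with Hamiltonian `H₀`, then
`{ψₜ + (ψ⁻¹)*H₀ − H, f} = 0`. -/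
theorem vlasov_generator_constraint
    (f f0 : ℝ → Ph → ℝ) (H H₀ : ℝ → Ph → ℝ)
    (ψ ψi : ℝ → Ph → Ph) (ψt : ℝ → Ph → ℝ)
    (hf : ContDiff ℝ (⊤ : ℕ∞) fun q : ℝ × Ph => f q.1 q.2)
    (hf0 : ContDiff ℝ (⊤ : ℕ∞) fun q : ℝ × Ph => f0 q.1 q.2)
    (hH : ContDiff ℝ (⊤ : ℕ∞) fun q : ℝ × Ph => H q.1 q.2)
    (hH₀ : ContDiff ℝ (⊤ : ℕ∞) fun q : ℝ × Ph => H₀ q.1 q.2)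
    (hψ : ContDiff ℝ (⊤ : ℕ∞) fun q : ℝ × Ph => ψ q.1 q.2)
    (hψi : ContDiff ℝ (⊤ : ℕ∞) fun q : ℝ × Ph => ψi q.1 q.2)
    (hψt : ContDiff ℝ (⊤ : ℕ∞) fun q : ℝ × Ph => ψt q.1 q.2)
    (hinv1 : ∀ t, Function.LeftInverse (ψi t) (ψ t))
    (hinv2 : ∀ t, Function.RightInverse (ψi t) (ψ t))
    (hsymp : ∀ t (g h : Ph → ℝ), ContDiff ℝ (⊤ : ℕ∞) g → ContDiff ℝ (⊤ : ℕ∞) h →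
      ∀ z, pb (g ∘ ψ t) (h ∘ ψ t) z = pb g h (ψ t z))
    (hgen : ∀ t z, deriv (fun s => ψ s (ψi t z)) t = Xham (ψt t) z)
    (hpar : ∀ t z, f t z = f0 t (ψi t z))
    (hvlasov : ∀ t z, deriv (fun s => f s z) t + pb (f t) (H t) z = 0)
    (hvlasov0 : ∀ t z, deriv (fun s => f0 s z) t + pb (f0 t) (H₀ t) z = 0) :
    ∀ t z, pb (fun w => ψt t w + H₀ t (ψi t w) - H t w) (f t) z = 0 := by
  intro t z
  set w := ψi t z with hw
  have hψtw : ψ t w = z := hinv2 t z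
  -- slice smoothness
  have hft : ContDiff ℝ (⊤ : ℕ∞) (f t) := slice_contDiff f hf t
  have hf0t : ContDiff ℝ (⊤ : ℕ∞) (f0 t) := slice_contDiff f0 hf0 t
  have hHt : ContDiff ℝ (⊤ : ℕ∞) (H t) := slice_contDiff H hH t
  have hH0t : ContDiff ℝ (⊤ : ℕ∞) (H₀ t) := slice_contDiff H₀ hH₀ t
  have hψit : ContDiff ℝ (⊤ : ℕ∞) (ψi t) := slice_contDiff ψi hψi t
  have hψtt : ContDiff ℝ (⊤ : ℕ∞) (ψt t) := slice_contDiff ψt hψt t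
  have hpull : ContDiff ℝ (⊤ : ℕ∞) (fun x => H₀ t (ψi t x)) := hH0t.comp hψit
  have hf0pull : ContDiff ℝ (⊤ : ℕ∞) (fun x => f0 t (ψi t x)) := hf0t.comp hψit
  -- the curve s ↦ ψ s w is differentiable at t
  have hγ : DifferentiableAt ℝ (fun s => ψ s w) t := by
    have hin : DifferentiableAt ℝ (fun s : ℝ => (s, w)) t :=
      differentiableAt_id.prodMk (differentiableAt_const w)
    exact ((hψ.differentiable (by simp)) (t, w)).comp t hin
  -- chain rule along the flow
  have hchain := chain_time f hf (fun s => ψ s w) t hγ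
  beta_reduce at hchain
  rw [hψtw, hgen t z] at hchain
  -- the composed family is just f0 at the fixed point w
  have hcomp : (fun s => f s (ψ s w)) = fun s => f0 s w := by
    funext s
    rw [hpar s (ψ s w), hinv1 s w]
  rw [hcomp] at hchain
  -- rewrite the fderiv term as a Poisson bracket
  rw [← pb_eq_fderiv_Xham (f t) (ψt t) z] at hchain
  -- use symplecticity of ψ t for the pulled-back bracket
  have hsy := hsymp t (fun x => f0 t (ψi t x)) (fun x => H₀ t (ψi t x)) hf0pull hpull w
  have hcg : ((fun x => f0 t (ψi t x)) ∘ ψ t) = f0 t :=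
    funext fun x => by simp only [Function.comp_apply, hinv1 t x]
  have hch : ((fun x => H₀ t (ψi t x)) ∘ ψ t) = H₀ t :=
    funext fun x => by simp only [Function.comp_apply, hinv1 t x]
  rw [hcg, hch, hψtw] at hsy
  -- f t equals the pullback of f0 t
  have hfeq : f t = fun x => f0 t (ψi t x) := funext fun x => hpar t x
  -- Vlasov equations
  have hv := hvlasov t z
  have hv0 := hvlasov0 t w
  -- assemble
  rw [pb_skew]
  have hd1 : DifferentiableAt ℝ (fun x => ψt t x + H₀ t (ψi t x)) z :=
    ((hψtt.differentiable (by simp)) z).add ((hpull.differentiable (by simp)) z)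
  rw [pb_sub₂ (f t) _ (H t) z hd1 ((hHt.differentiable (by simp)) z),
    pb_add₂ (f t) (ψt t) _ z ((hψtt.differentiable (by simp)) z)
      ((hpull.differentiable (by simp)) z)]
  have hBf : pb (f t) (fun x => H₀ t (ψi t x)) z = pb (f0 t) (H₀ t) w := by
    rw [hfeq, hsy]
  rw [hBf]
  linarith [hchain, hv, hv0]
end
end

section
/- On an oriented Riemannian 3-manifold, define for smooth functions α, β the 'rotational' vector field X_α^β := g⁻¹(∗_g d(α dβ)) and the bracket {α₁, α₂}_β := −X_{α₁}^β(α₂). Then: (i) ∗_g( (X_{α₁}^β)^♭ ∧ (X_{α₂}^β)^♭ ) = {α₁, α₂}_β dβ; (ii) the Lie bracket satisfies [X_{α₁}^β, X_{α₂}^β] = X^β_{−{α₁,α₂}_β}; (iii) X_α^β(f(β)) = 0 for any smooth f : ℝ → ℝ. -/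
open scoped BigOperators
noncomputable section

/-- Standard basis of `ℝ³`. -/
def stdB : Module.Basis (Fin 3) ℝ E3 := (EuclideanSpace.basisFun (Fin 3) ℝ).toBasis

/-- The metric volume density `√det g` in standard coordinates. -/
def sdet (G : E3 → E3 →ₗ[ℝ] E3 →ₗ[ℝ] ℝ) (x : E3) : ℝ :=
  Real.sqrt (LinearMap.toMatrix₂ stdB stdB (G x)).det

/-- Coordinate gradient components `(∂ᵢ f)(x)`. -/
def gradc (f : E3 → ℝ) (x : E3) (i : Fin 3) : ℝ := fderiv ℝ f x (EuclideanSpace.single i 1)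

/-- Coordinate cross product. -/
def crossc (a b : Fin 3 → ℝ) : Fin 3 → ℝ :=
  ![a 1 * b 2 - a 2 * b 1, a 2 * b 0 - a 0 * b 2, a 0 * b 1 - a 1 * b 0]

/-- The rotational vector field `X_α^β := g⁻¹(∗_g d(α dβ))`, in standard coordinates
`X_α^β = (1/√det g) ∇α × ∇β`. -/
def rotVF (G : E3 → E3 →ₗ[ℝ] E3 →ₗ[ℝ] ℝ) (α β : E3 → ℝ) (x : E3) : E3 :=
  (sdet G x)⁻¹ • ∑ i, crossc (gradc α x) (gradc β x) i • EuclideanSpace.single i 1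

/-- The rotational bracket `{α₁, α₂}_β := −X_{α₁}^β(α₂)`. -/
def rotBr (G : E3 → E3 →ₗ[ℝ] E3 →ₗ[ℝ] ℝ) (β α₁ α₂ : E3 → ℝ) (x : E3) : ℝ :=
  -(fderiv ℝ α₂ x (rotVF G α₁ β x))

/-! ### Auxiliary lemmas -/

/-- component of rotVF -/
lemma rotVF_apply (G : E3 → E3 →ₗ[ℝ] E3 →ₗ[ℝ] ℝ) (α β : E3 → ℝ) (x : E3) (i : Fin 3) :
    rotVF G α β x i = (sdet G x)⁻¹ * crossc (gradc α x) (gradc β x) i := by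
  unfold rotVF
  fin_cases i <;>
    simp [Fin.sum_univ_three, PiLp.add_apply, PiLp.smul_apply, EuclideanSpace.single_apply]

/-- expansion of a continuous linear functional on E3 -/
lemma clm_expand (L : E3 →L[ℝ] ℝ) (w : E3) :
    L w = ∑ k, w k * L (EuclideanSpace.single k 1) := by
  have hw : w = ∑ k, w k • (EuclideanSpace.single k 1 : E3) := by
    ext i
    fin_cases i <;>
      simp [Fin.sum_univ_three, PiLp.add_apply, PiLp.smul_apply, EuclideanSpace.single_apply]
  conv_lhs => rw [hw]
  rw [map_sum]
  exact Finset.sum_congr rfl fun k _ => by rw [map_smul, smul_eq_mul]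

lemma gradc_hasFDerivAt (f : E3 → ℝ) (hf : ContDiff ℝ (⊤ : ℕ∞) f) (x : E3) (i : Fin 3) :
    HasFDerivAt (fun y => gradc f y i)
      ((ContinuousLinearMap.apply ℝ ℝ (EuclideanSpace.single i 1)).comp
        (fderiv ℝ (fderiv ℝ f) x)) x := by
  have A := (ContinuousLinearMap.apply ℝ ℝ (EuclideanSpace.single i 1 : E3)).hasFDerivAt.comp x
    (((hf.fderiv_right (m := (⊤ : ℕ∞)) (by simp)).differentiable (by simp) x).hasFDerivAt)
  exact A

lemma schwarz (f : E3 → ℝ) (hf : ContDiff ℝ (⊤ : ℕ∞) f) (x : E3) (v w : E3) :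
    fderiv ℝ (fderiv ℝ f) x v w = fderiv ℝ (fderiv ℝ f) x w v :=
  ((hf.contDiffAt).isSymmSndFDerivAt (by rw [minSmoothness_of_isRCLikeNormedField]; exact WithTop.coe_le_coe.2 le_top)) v w

/-- derivative CLM of `y ↦ gradc f y j` -/
def DD (f : E3 → ℝ) (x : E3) (j : Fin 3) : E3 →L[ℝ] ℝ :=
  (ContinuousLinearMap.apply ℝ ℝ (EuclideanSpace.single j 1)).comp (fderiv ℝ (fderiv ℝ f) x)

lemma DD_expand (f : E3 → ℝ) (x : E3) (j : Fin 3) (w : E3) :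
    DD f x j w = ∑ m, w m *
      fderiv ℝ (fderiv ℝ f) x (EuclideanSpace.single m 1) (EuclideanSpace.single j 1) := by
  rw [clm_expand]
  rfl

/-- derivative CLMs of the cross product components -/
def crossD (f g : E3 → ℝ) (x : E3) : Fin 3 → (E3 →L[ℝ] ℝ) :=
  ![gradc f x 1 • DD g x 2 + gradc g x 2 • DD f x 1 -
      (gradc f x 2 • DD g x 1 + gradc g x 1 • DD f x 2),
    gradc f x 2 • DD g x 0 + gradc g x 0 • DD f x 2 -
      (gradc f x 0 • DD g x 2 + gradc g x 2 • DD f x 0),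
    gradc f x 0 • DD g x 1 + gradc g x 1 • DD f x 0 -
      (gradc f x 1 • DD g x 0 + gradc g x 0 • DD f x 1)]

lemma crossc_hasFDerivAt (f g : E3 → ℝ) (hf : ContDiff ℝ (⊤ : ℕ∞) f) (hg : ContDiff ℝ (⊤ : ℕ∞) g)
    (x : E3) (i : Fin 3) :
    HasFDerivAt (fun y => crossc (gradc f y) (gradc g y) i) (crossD f g x i) x := by
  fin_cases i <;>
  · show HasFDerivAt _ _ x
    simp only [crossc, crossD, Matrix.cons_val_zero, Matrix.cons_val_one, Matrix.head_cons,
      Matrix.cons_val_two, Matrix.tail_cons]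
    exact ((gradc_hasFDerivAt f hf x _).mul (gradc_hasFDerivAt g hg x _)).sub
      ((gradc_hasFDerivAt f hf x _).mul (gradc_hasFDerivAt g hg x _))

section withG

variable (G : E3 → E3 →ₗ[ℝ] E3 →ₗ[ℝ] ℝ)
  (hGsmooth : ∀ u w : E3, ContDiff ℝ (⊤ : ℕ∞) fun x => G x u w)
  (hGsymm : ∀ x u w, G x u w = G x w u)
  (hGpos : ∀ x u, u ≠ 0 → 0 < G x u u)

lemma entry_eq (x : E3) (i j : Fin 3) :
    (LinearMap.toMatrix₂ stdB stdB (G x)) i j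
      = G x (EuclideanSpace.single i 1) (EuclideanSpace.single j 1) := by
  rw [LinearMap.toMatrix₂_apply]
  simp [stdB]

include hGsymm hGpos in
lemma det_pos' (x : E3) : 0 < (LinearMap.toMatrix₂ stdB stdB (G x)).det := by
  apply Matrix.PosDef.det_pos
  refine Matrix.PosDef.of_dotProduct_mulVec_pos ?_ ?_
  · ext i j
    simp only [Matrix.conjTranspose_apply, entry_eq, star_trivial]
    exact hGsymm x _ _
  · intro z hz
    have hcomp : ∀ i, (∑ j, z j • (EuclideanSpace.single j 1 : E3)) i = z i := by
      intro i
      fin_cases i <;>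
        simp [Fin.sum_univ_three, PiLp.add_apply, PiLp.smul_apply, EuclideanSpace.single_apply]
    have hw : (∑ j, z j • (EuclideanSpace.single j 1 : E3)) ≠ 0 := by
      intro h
      apply hz
      funext i
      rw [← hcomp i, h]
      rfl
    have hpos := hGpos x _ hw
    have : dotProduct (star z) (Matrix.mulVec (LinearMap.toMatrix₂ stdB stdB (G x)) z)
        = G x (∑ j, z j • (EuclideanSpace.single j 1 : E3))
            (∑ j, z j • (EuclideanSpace.single j 1 : E3)) := by
      simp only [dotProduct, Matrix.mulVec, entry_eq, map_sum, map_smul,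
        LinearMap.sum_apply, LinearMap.smul_apply, smul_eq_mul, star_trivial,
        Fin.sum_univ_three, map_add, LinearMap.add_apply]
      ring
    rw [this]
    exact hpos

include hGsmooth in
lemma det_contDiff : ContDiff ℝ (⊤ : ℕ∞) fun x => (LinearMap.toMatrix₂ stdB stdB (G x)).det := by
  have h : ∀ i j : Fin 3, ContDiff ℝ (⊤ : ℕ∞) fun x => (LinearMap.toMatrix₂ stdB stdB (G x)) i j := by
    intro i j
    simp only [entry_eq]
    exact hGsmooth _ _
  have heq : (fun x => (LinearMap.toMatrix₂ stdB stdB (G x)).det)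
      = fun x => ((LinearMap.toMatrix₂ stdB stdB (G x)) 0 0 * ((LinearMap.toMatrix₂ stdB stdB (G x)) 1 1 * (LinearMap.toMatrix₂ stdB stdB (G x)) 2 2 - (LinearMap.toMatrix₂ stdB stdB (G x)) 1 2 * (LinearMap.toMatrix₂ stdB stdB (G x)) 2 1)
        - (LinearMap.toMatrix₂ stdB stdB (G x)) 0 1 * ((LinearMap.toMatrix₂ stdB stdB (G x)) 1 0 * (LinearMap.toMatrix₂ stdB stdB (G x)) 2 2 - (LinearMap.toMatrix₂ stdB stdB (G x)) 1 2 * (LinearMap.toMatrix₂ stdB stdB (G x)) 2 0)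
        + (LinearMap.toMatrix₂ stdB stdB (G x)) 0 2 * ((LinearMap.toMatrix₂ stdB stdB (G x)) 1 0 * (LinearMap.toMatrix₂ stdB stdB (G x)) 2 1 - (LinearMap.toMatrix₂ stdB stdB (G x)) 1 1 * (LinearMap.toMatrix₂ stdB stdB (G x)) 2 0)) := by
    funext x
    rw [Matrix.det_fin_three]
    ring
  rw [heq]
  exact (((h 0 0).mul (((h 1 1).mul (h 2 2)).sub ((h 1 2).mul (h 2 1)))).sub
    ((h 0 1).mul (((h 1 0).mul (h 2 2)).sub ((h 1 2).mul (h 2 0))))).add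
    ((h 0 2).mul (((h 1 0).mul (h 2 1)).sub ((h 1 1).mul (h 2 0))))

include hGsymm hGpos in
lemma sdet_pos (x : E3) : 0 < sdet G x := Real.sqrt_pos.2 (det_pos' G hGsymm hGpos x)

include hGsmooth hGsymm hGpos in
lemma inv_sdet_contDiffAt (x : E3) : ContDiffAt ℝ (⊤ : ℕ∞) (fun y => (sdet G y)⁻¹) x := by
  have h1 : ContDiffAt ℝ (⊤ : ℕ∞) (fun y => sdet G y) x := by
    have := (Real.contDiffAt_sqrt (ne_of_gt (det_pos' G hGsymm hGpos x))).comp x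
      (det_contDiff G hGsmooth).contDiffAt
    exact this
  exact h1.inv (ne_of_gt (sdet_pos G hGsymm hGpos x))

include hGsmooth hGsymm hGpos in
lemma sdet_inv_hasFDerivAt (x : E3) :
    HasFDerivAt (fun y => (sdet G y)⁻¹) (fderiv ℝ (fun y => (sdet G y)⁻¹) x) x :=
  ((inv_sdet_contDiffAt G hGsmooth hGsymm hGpos x).differentiableAt (by simp)).hasFDerivAt

include hGsmooth hGsymm hGpos in
lemma rotVF_hasFDerivAt (f g : E3 → ℝ) (hf : ContDiff ℝ (⊤ : ℕ∞) f) (hg : ContDiff ℝ (⊤ : ℕ∞) g) (x : E3) :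
    HasFDerivAt (rotVF G f g)
      ((sdet G x)⁻¹ • (∑ i, (crossD f g x i).smulRight (EuclideanSpace.single i 1))
        + (fderiv ℝ (fun y => (sdet G y)⁻¹) x).smulRight
            (∑ i, crossc (gradc f x) (gradc g x) i • EuclideanSpace.single i 1)) x := by
  have hc : HasFDerivAt
      (fun y => ∑ i, crossc (gradc f y) (gradc g y) i • (EuclideanSpace.single i 1 : E3))
      (∑ i, (crossD f g x i).smulRight (EuclideanSpace.single i 1)) x :=
    HasFDerivAt.fun_sum fun i _ => (crossc_hasFDerivAt f g hf hg x i).smul_const _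
  have h := (sdet_inv_hasFDerivAt G hGsmooth hGsymm hGpos x).smul hc
  exact h

include hGsmooth hGsymm hGpos in
lemma rotVF_fderiv_apply (f g : E3 → ℝ) (hf : ContDiff ℝ (⊤ : ℕ∞) f) (hg : ContDiff ℝ (⊤ : ℕ∞) g)
    (x : E3) (w : E3) (j : Fin 3) :
    fderiv ℝ (rotVF G f g) x w j
      = (sdet G x)⁻¹ * crossD f g x j w
        + (fderiv ℝ (fun y => (sdet G y)⁻¹) x w) * crossc (gradc f x) (gradc g x) j := by
  rw [(rotVF_hasFDerivAt G hGsmooth hGsymm hGpos f g hf hg x).fderiv]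
  fin_cases j <;>
    simp [ContinuousLinearMap.add_apply, ContinuousLinearMap.coe_smul', Pi.smul_apply,
      ContinuousLinearMap.smulRight_apply, ContinuousLinearMap.sum_apply,
      Fin.sum_univ_three, PiLp.add_apply, PiLp.smul_apply, EuclideanSpace.single_apply,
      smul_eq_mul, mul_comm]

end withG
set_option maxHeartbeats 4000000 in
/-- on an oriented Riemannian 3-manifold: (i) `∗_g((X_{α₁}^β)♭ ∧ (X_{α₂}^β)♭)
= {α₁,α₂}_β dβ` (in coordinates, `√g (X₁ × X₂) = {α₁,α₂}_β ∇β`); (ii) the Lie bracket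
satisfies `[X_{α₁}^β, X_{α₂}^β] = X^β_{−{α₁,α₂}_β}`; (iii) `X_α^β(f(β)) = 0` for any
smooth `f : ℝ → ℝ`. -/
theorem rotational_bracket_structure
    (G : E3 → E3 →ₗ[ℝ] E3 →ₗ[ℝ] ℝ)
    (hGsmooth : ∀ u w : E3, ContDiff ℝ (⊤ : ℕ∞) fun x => G x u w)
    (hGsymm : ∀ x u w, G x u w = G x w u)
    (hGpos : ∀ x u, u ≠ 0 → 0 < G x u u)
    (α α₁ α₂ β : E3 → ℝ)
    (hα : ContDiff ℝ (⊤ : ℕ∞) α) (hα₁ : ContDiff ℝ (⊤ : ℕ∞) α₁) (hα₂ : ContDiff ℝ (⊤ : ℕ∞) α₂)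
    (hβ : ContDiff ℝ (⊤ : ℕ∞) β) :
    (∀ (x : E3) (i : Fin 3),
        sdet G x * crossc (fun j => rotVF G α₁ β x j) (fun j => rotVF G α₂ β x j) i
          = rotBr G β α₁ α₂ x * gradc β x i)
    ∧ (∀ x : E3,
        fderiv ℝ (rotVF G α₂ β) x (rotVF G α₁ β x)
            - fderiv ℝ (rotVF G α₁ β) x (rotVF G α₂ β x)
          = rotVF G (fun y => -(rotBr G β α₁ α₂ y)) β x)
    ∧ (∀ f : ℝ → ℝ, ContDiff ℝ (⊤ : ℕ∞) f →
        ∀ x : E3, fderiv ℝ (fun y => f (β y)) x (rotVF G α β x) = 0) := by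
  have hbr : ∀ x : E3, rotBr G β α₁ α₂ x
      = -(∑ k, ((sdet G x)⁻¹ * crossc (gradc α₁ x) (gradc β x) k) * gradc α₂ x k) := by
    intro x
    rw [rotBr, clm_expand]
    congr 1
    refine Finset.sum_congr rfl fun k _ => ?_
    rw [rotVF_apply]
    simp only [gradc]
  refine ⟨?_, ?_, ?_⟩
  · intro x i
    have hs : sdet G x ≠ 0 := ne_of_gt (sdet_pos G hGsymm hGpos x)
    rw [hbr]
    have hi : i = 0 ∨ i = 1 ∨ i = 2 := by fin_cases i <;> simp
    rcases hi with h|h|h <;> subst h <;>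
    · simp only [crossc, Matrix.cons_val_zero, Matrix.cons_val_one, Matrix.head_cons,
        Matrix.cons_val_two, Matrix.tail_cons, rotVF_apply, Fin.sum_univ_three]
      field_simp
      ring
  · intro x
    have hX1' : HasFDerivAt (rotVF G α₁ β) (fderiv ℝ (rotVF G α₁ β) x) x :=
      (rotVF_hasFDerivAt G hGsmooth hGsymm hGpos α₁ β hα₁ hβ x).differentiableAt.hasFDerivAt
    have hfa2 : HasFDerivAt (fderiv ℝ α₂) (fderiv ℝ (fderiv ℝ α₂) x) x :=
      (((hα₂.fderiv_right (m := (⊤ : ℕ∞)) (by simp))).differentiable (by simp) x).hasFDerivAt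
    have hψd : HasFDerivAt (fun y => -(rotBr G β α₁ α₂ y))
        ((fderiv ℝ α₂ x).comp (fderiv ℝ (rotVF G α₁ β) x)
          + (fderiv ℝ (fderiv ℝ α₂) x).flip (rotVF G α₁ β x)) x := by
      have h := hfa2.clm_apply hX1'
      have heq : (fun y => -(rotBr G β α₁ α₂ y))
          = (fun y => (fderiv ℝ α₂ y) (rotVF G α₁ β y)) := by
        funext y; simp [rotBr]
      rw [heq]
      exact h
    have hgradψ : ∀ k : Fin 3, gradc (fun y => -(rotBr G β α₁ α₂ y)) x k
        = (∑ m, ((sdet G x)⁻¹ * crossD α₁ β x m (EuclideanSpace.single k 1)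
              + fderiv ℝ (fun y => (sdet G y)⁻¹) x (EuclideanSpace.single k 1)
                * crossc (gradc α₁ x) (gradc β x) m) * gradc α₂ x m)
          + ∑ m, ((sdet G x)⁻¹ * crossc (gradc α₁ x) (gradc β x) m)
              * fderiv ℝ (fderiv ℝ α₂) x (EuclideanSpace.single k 1)
                  (EuclideanSpace.single m 1) := by
      intro k
      show fderiv ℝ (fun y => -(rotBr G β α₁ α₂ y)) x (EuclideanSpace.single k 1) = _
      rw [hψd.fderiv, ContinuousLinearMap.add_apply, ContinuousLinearMap.comp_apply,
        ContinuousLinearMap.flip_apply]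
      congr 1
      · rw [clm_expand (fderiv ℝ α₂ x)]
        refine Finset.sum_congr rfl fun m _ => ?_
        rw [rotVF_fderiv_apply G hGsmooth hGsymm hGpos α₁ β hα₁ hβ x]
        simp only [gradc]
      · rw [clm_expand (fderiv ℝ (fderiv ℝ α₂) x (EuclideanSpace.single k 1))]
        refine Finset.sum_congr rfl fun m _ => ?_
        rw [rotVF_apply]
    have s110 : fderiv ℝ (fderiv ℝ α₁) x (EuclideanSpace.single 1 1) (EuclideanSpace.single 0 1)
        = fderiv ℝ (fderiv ℝ α₁) x (EuclideanSpace.single 0 1) (EuclideanSpace.single 1 1) :=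
      schwarz α₁ hα₁ x _ _
    have s120 : fderiv ℝ (fderiv ℝ α₁) x (EuclideanSpace.single 2 1) (EuclideanSpace.single 0 1)
        = fderiv ℝ (fderiv ℝ α₁) x (EuclideanSpace.single 0 1) (EuclideanSpace.single 2 1) :=
      schwarz α₁ hα₁ x _ _
    have s121 : fderiv ℝ (fderiv ℝ α₁) x (EuclideanSpace.single 2 1) (EuclideanSpace.single 1 1)
        = fderiv ℝ (fderiv ℝ α₁) x (EuclideanSpace.single 1 1) (EuclideanSpace.single 2 1) :=
      schwarz α₁ hα₁ x _ _
    have s210 : fderiv ℝ (fderiv ℝ α₂) x (EuclideanSpace.single 1 1) (EuclideanSpace.single 0 1)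
        = fderiv ℝ (fderiv ℝ α₂) x (EuclideanSpace.single 0 1) (EuclideanSpace.single 1 1) :=
      schwarz α₂ hα₂ x _ _
    have s220 : fderiv ℝ (fderiv ℝ α₂) x (EuclideanSpace.single 2 1) (EuclideanSpace.single 0 1)
        = fderiv ℝ (fderiv ℝ α₂) x (EuclideanSpace.single 0 1) (EuclideanSpace.single 2 1) :=
      schwarz α₂ hα₂ x _ _
    have s221 : fderiv ℝ (fderiv ℝ α₂) x (EuclideanSpace.single 2 1) (EuclideanSpace.single 1 1)
        = fderiv ℝ (fderiv ℝ α₂) x (EuclideanSpace.single 1 1) (EuclideanSpace.single 2 1) :=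
      schwarz α₂ hα₂ x _ _
    have sb10 : fderiv ℝ (fderiv ℝ β) x (EuclideanSpace.single 1 1) (EuclideanSpace.single 0 1)
        = fderiv ℝ (fderiv ℝ β) x (EuclideanSpace.single 0 1) (EuclideanSpace.single 1 1) :=
      schwarz β hβ x _ _
    have sb20 : fderiv ℝ (fderiv ℝ β) x (EuclideanSpace.single 2 1) (EuclideanSpace.single 0 1)
        = fderiv ℝ (fderiv ℝ β) x (EuclideanSpace.single 0 1) (EuclideanSpace.single 2 1) :=
      schwarz β hβ x _ _
    have sb21 : fderiv ℝ (fderiv ℝ β) x (EuclideanSpace.single 2 1) (EuclideanSpace.single 1 1)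
        = fderiv ℝ (fderiv ℝ β) x (EuclideanSpace.single 1 1) (EuclideanSpace.single 2 1) :=
      schwarz β hβ x _ _
    ext i
    have hsub : ∀ (a b : E3) (j : Fin 3), (a - b) j = a j - b j := fun _ _ _ => rfl
    rw [hsub]
    rw [rotVF_fderiv_apply G hGsmooth hGsymm hGpos α₂ β hα₂ hβ x (rotVF G α₁ β x) i,
      rotVF_fderiv_apply G hGsmooth hGsymm hGpos α₁ β hα₁ hβ x (rotVF G α₂ β x) i,
      rotVF_apply G _ β x i,
      clm_expand (fderiv ℝ (fun y => (sdet G y)⁻¹) x) (rotVF G α₁ β x),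
      clm_expand (fderiv ℝ (fun y => (sdet G y)⁻¹) x) (rotVF G α₂ β x)]
    have hi : i = 0 ∨ i = 1 ∨ i = 2 := by fin_cases i <;> simp
    rcases hi with h|h|h <;> subst h <;>
    · simp only [crossc, crossD, Matrix.cons_val_zero, Matrix.cons_val_one, Matrix.head_cons,
        Matrix.cons_val_two, Matrix.tail_cons, hgradψ, rotVF_apply,
        ContinuousLinearMap.sub_apply, ContinuousLinearMap.add_apply,
        ContinuousLinearMap.coe_smul', Pi.smul_apply, smul_eq_mul, DD_expand,
        Fin.sum_univ_three, EuclideanSpace.single_apply, Fin.reduceEq, reduceIte,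
        mul_one, mul_zero, zero_mul, one_mul, add_zero, zero_add]
      simp only [s110, s120, s121, s210, s220, s221, sb10, sb20, sb21]
      ring
  · intro f hf x
    have hβd : DifferentiableAt ℝ β x := hβ.differentiable (by simp) x
    have hfd : DifferentiableAt ℝ f (β x) := hf.differentiable (by simp) (β x)
    have hcomp : fderiv ℝ (fun y => f (β y)) x = (fderiv ℝ f (β x)).comp (fderiv ℝ β x) :=
      fderiv_comp x hfd hβd
    rw [hcomp, ContinuousLinearMap.comp_apply]
    have hz : fderiv ℝ β x (rotVF G α β x) = 0 := by
      rw [clm_expand]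
      have hg : ∀ k, fderiv ℝ β x (EuclideanSpace.single k 1) = gradc β x k := fun _ => rfl
      simp only [rotVF_apply, hg, Fin.sum_univ_three, crossc, Matrix.cons_val_zero,
        Matrix.cons_val_one, Matrix.head_cons, Matrix.cons_val_two, Matrix.tail_cons]
      ring
    rw [hz, map_zero]
end
end
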